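/- arXiv:1910.05268 — 2 statements merged into one kernel-verified Lean document; each statement's English description precedes it below -/
import Mathlib

section
/- (Additive drift theorem) Let (X_t)_{t≥0} be a stochastic process adapted to a filtration (F_t) with values in [0, ∞) and X_0 = n almost surely for some n ≥ 0. Suppose there exists c > 0 such that for all t ≥ 0, almost surely on the event {X_t > 0}, E[X_{t+1} | F_t] ≤ X_t − c. Let T = inf{t ≥ 0 : X_t = 0}. Then E[T] ≤ n/c. -/
/-!
Let `A t` be the event that the process has not hit `0` by time `t`; it is `F t`-measurable
and `X t > 0` on it. Integrating the drift condition over `A t` and shrinking to `A (t + 1)`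
gives `∫_{A (t+1)} X (t+1) + c μ(A t) ≤ ∫_{A t} X t`, so the quantities `∫_{A t} X t ≥ 0`
telescope to `c ∑_{t<k} μ(A t) ≤ ∫ X 0 = n`. The tail-sum formula `E[T] = ∑_t P(T > t)`
with `{T > t} = A t` finishes the proof.
-/

open MeasureTheory Finset
open scoped ENNReal

theorem iInf_natCast_eq_tsum_ite (P : ℕ → Prop) [DecidablePred P] :
    ⨅ (t : ℕ) (_ : P t), (t : ℝ≥0∞) = ∑' t : ℕ, if ∀ s ≤ t, ¬ P s then 1 else 0 := by
  by_cases h : ∃ t, P t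
  · have hfind : ⨅ (t : ℕ) (_ : P t), (t : ℝ≥0∞) = Nat.find h :=
      le_antisymm (iInf₂_le _ (Nat.find_spec h))
        (le_iInf₂ fun t ht => Nat.cast_le.mpr (Nat.find_min' h ht))
    simp only [hfind, ← Nat.lt_find_iff h]
    rw [tsum_eq_sum (s := range (Nat.find h)) fun t ht => by simpa using ht,
      sum_ite_of_true fun t ht => mem_range.mp ht]
    simp
  · push Not at h
    simp [h]

theorem lintegral_iInf_natCast_eq_tsum_measure {Ω : Type*} {mΩ : MeasurableSpace Ω}
    (μ : Measure Ω) (P : ℕ → Ω → Prop)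
    (hP : ∀ t, MeasurableSet {ω | ∀ s ≤ t, ¬ P s ω}) :
    ∫⁻ ω, ⨅ (t : ℕ) (_ : P t ω), (t : ℝ≥0∞) ∂μ = ∑' t, μ {ω | ∀ s ≤ t, ¬ P s ω} := by
  classical
  calc ∫⁻ ω, ⨅ (t : ℕ) (_ : P t ω), (t : ℝ≥0∞) ∂μ
      = ∫⁻ ω, ∑' t, {ω | ∀ s ≤ t, ¬ P s ω}.indicator 1 ω ∂μ := by
        simp only [iInf_natCast_eq_tsum_ite, Set.indicator_apply, Set.mem_ofPred_eq,
          Pi.one_apply]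
    _ = ∑' t, μ {ω | ∀ s ≤ t, ¬ P s ω} := by
        rw [lintegral_tsum fun t => (measurable_one.indicator (hP t)).aemeasurable]
        simp_rw [lintegral_indicator_one (hP _)]

theorem measurableSet_forall_le_ne_zero {Ω : Type*} {mΩ : MeasurableSpace Ω}
    {F : Filtration ℕ mΩ} {X : ℕ → Ω → ℝ} (hadp : Adapted F X) (t : ℕ) :
    MeasurableSet[F t] {ω | ∀ s ≤ t, X s ω ≠ 0} := by
  simp only [Set.ofPred_forall]
  exact .iInter fun s => .iInter fun hs =>
    ((hadp s).mono (F.mono hs) le_rfl (measurableSet_singleton 0)).compl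

theorem setIntegral_le_setIntegral_sub_of_condExp_le {Ω : Type*} {m mΩ : MeasurableSpace Ω}
    {μ : Measure Ω} [IsFiniteMeasure μ] (hm : m ≤ mΩ) {f g : Ω → ℝ}
    (hf : Integrable f μ) (hg : Integrable g μ) {s : Set Ω} (hs : MeasurableSet[m] s) {c : ℝ}
    (h : ∀ᵐ ω ∂μ, ω ∈ s → μ[g|m] ω ≤ f ω - c) :
    ∫ ω in s, g ω ∂μ ≤ ∫ ω in s, f ω ∂μ - c * μ.real s := by
  calc ∫ ω in s, g ω ∂μ = ∫ ω in s, μ[g|m] ω ∂μ := (setIntegral_condExp hm hg hs).symm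
    _ ≤ ∫ ω in s, (f ω - c) ∂μ :=
        setIntegral_mono_ae_restrict integrable_condExp.integrableOn
          (hf.sub (integrable_const c)).integrableOn ((ae_restrict_iff' (hm s hs)).2 h)
    _ = ∫ ω in s, f ω ∂μ - c * μ.real s := by
        rw [integral_sub hf.integrableOn (integrable_const c).integrableOn, setIntegral_const,
          smul_eq_mul, mul_comm]

theorem mul_sum_range_le_of_add_mul_le {a b : ℕ → ℝ} {c : ℝ}
    (h : ∀ t, a (t + 1) + c * b t ≤ a t) (ha : ∀ t, 0 ≤ a t) (k : ℕ) :
    c * ∑ t ∈ range k, b t ≤ a 0 := by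
  have telescope : ∀ k, a k + c * ∑ t ∈ range k, b t ≤ a 0 := by
    intro k
    induction k with
    | zero => simp
    | succ k ih => rw [sum_range_succ]; linarith [h k]
  linarith [telescope k, ha k]

theorem tsum_measure_le_ofReal_of_sum_range_measureReal_le {Ω : Type*}
    {mΩ : MeasurableSpace Ω} {μ : Measure Ω} [IsFiniteMeasure μ] {A : ℕ → Set Ω} {r : ℝ}
    (h : ∀ k, ∑ t ∈ range k, μ.real (A t) ≤ r) : ∑' t, μ (A t) ≤ ENNReal.ofReal r :=
  ENNReal.tsum_le_of_sum_range_le fun k => by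
    rw [← ENNReal.ofReal_toReal (ENNReal.sum_ne_top.2 fun t _ => measure_ne_top μ (A t)),
      ENNReal.toReal_sum fun t _ => measure_ne_top μ (A t)]
    exact ENNReal.ofReal_le_ofReal (h k)

theorem additive_drift_theorem_general
    {Ω : Type*} {mΩ : MeasurableSpace Ω} (μ : Measure Ω) [IsProbabilityMeasure μ]
    (F : Filtration ℕ mΩ)
    (X : ℕ → Ω → ℝ) (hadp : Adapted F X)
    (hint : ∀ t, Integrable (X t) μ)
    (hnonneg : ∀ t ω, 0 ≤ X t ω)
    (n : ℝ) (h0 : ∀ᵐ ω ∂μ, X 0 ω = n)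
    (c : ℝ) (hc : 0 < c)
    (hdrift : ∀ t : ℕ, ∀ᵐ ω ∂μ, 0 < X t ω → (μ[X (t + 1) | F t]) ω ≤ X t ω - c) :
    ∫⁻ ω, ⨅ (t : ℕ) (_ : X t ω = 0), (t : ℝ≥0∞) ∂μ ≤ ENNReal.ofReal (n / c) := by
  set A : ℕ → Set Ω := fun t => {ω | ∀ s ≤ t, X s ω ≠ 0}
  have hA t : MeasurableSet (A t) := F.le t _ (measurableSet_forall_le_ne_zero hadp t)
  have step t : ∫ ω in A (t + 1), X (t + 1) ω ∂μ + c * μ.real (A t) ≤ ∫ ω in A t, X t ω ∂μ := by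
    have hshrink : ∫ ω in A (t + 1), X (t + 1) ω ∂μ ≤ ∫ ω in A t, X (t + 1) ω ∂μ :=
      setIntegral_mono_set (hint _).integrableOn (.of_forall (hnonneg _))
        (.of_forall fun ω hω s hs => hω s (hs.trans t.le_succ))
    have hdrop := setIntegral_le_setIntegral_sub_of_condExp_le (F.le t) (hint t)
      (hint (t + 1)) (measurableSet_forall_le_ne_zero hadp t) (c := c) <| by
        filter_upwards [hdrift t] with ω hω hmem
        exact hω ((hnonneg t ω).lt_of_ne (hmem t le_rfl).symm)
    linarith
  have hstart : ∫ ω in A 0, X 0 ω ∂μ ≤ n :=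
    calc ∫ ω in A 0, X 0 ω ∂μ ≤ ∫ ω, X 0 ω ∂μ :=
          setIntegral_le_integral (hint 0) (.of_forall (hnonneg 0))
      _ = n := by simp [integral_congr_ae h0]
  rw [lintegral_iInf_natCast_eq_tsum_measure μ _ hA]
  refine tsum_measure_le_ofReal_of_sum_range_measureReal_le fun k => ?_
  rw [le_div_iff₀' hc]
  exact (mul_sum_range_le_of_add_mul_le step
    (fun t => setIntegral_nonneg (hA t) fun ω _ => hnonneg t ω) k).trans hstart

/-- Additive drift theorem: if a nonnegative adapted integrable process starts at `n` and,
on the event `X_t > 0`, satisfies `E[X_{t+1} | F_t] ≤ X_t - c` for some `c > 0`, then the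
first hitting time `T` of `0` satisfies `E[T] ≤ n / c`. -/
theorem additive_drift_theorem
    {Ω : Type*} {mΩ : MeasurableSpace Ω} (μ : Measure Ω) [IsProbabilityMeasure μ]
    (F : Filtration ℕ mΩ)
    (X : ℕ → Ω → ℝ) (hadp : Adapted F X)
    (hint : ∀ t, Integrable (X t) μ)
    (hnonneg : ∀ t ω, 0 ≤ X t ω)
    (n : ℝ) (hn : 0 ≤ n) (h0 : ∀ᵐ ω ∂μ, X 0 ω = n)
    (c : ℝ) (hc : 0 < c)
    (hdrift : ∀ t : ℕ, ∀ᵐ ω ∂μ, 0 < X t ω → (μ[X (t + 1) | F t]) ω ≤ X t ω - c) :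
    ∫⁻ ω, ⨅ (t : ℕ) (_ : X t ω = 0), (t : ℝ≥0∞) ∂μ ≤ ENNReal.ofReal (n / c) :=
  additive_drift_theorem_general μ F X hadp hint hnonneg n h0 c hc hdrift
end

section
/- (Variable drift theorem) Let (X_t)_{t≥0} be a stochastic process adapted to a filtration (F_t) with values in {0} ∪ [1, ∞) and X_0 = n almost surely for some n ≥ 1. Suppose there is a positive, monotone increasing function h : [1, ∞) → (0, ∞) such that for all t ≥ 0, almost surely on the event {X_t ≥ 1}, E[X_{t+1} | F_t] ≤ X_t − h(X_t). Let T = inf{t ≥ 0 : X_t = 0}. Then E[T] ≤ 1/h(1) + ∫₁ⁿ 1/h(u) du. -/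
/-!
Extend `h` by the constant `h 1` on `(-∞, 1]`, so that it is monotone and positive on all of `ℝ`,
and use the potential `g x = ∫₀ˣ 1/h`; then `g 0 = 0` and `g n = 1/h(1) + ∫₁ⁿ 1/h`.
Since `1/h` is decreasing, `g` is concave, so it lies below its tangents:
`g y ≤ g x + (y - x)/h(x)`. On the survival event `{T > t}`, which is `F_t`-measurable,
the drift condition therefore makes `g(X_t)` lose at least `1` in conditional expectation:
`E[g(X_{t+1}); T > t+1] + P(T > t) ≤ E[g(X_t); T > t]`. Telescoping gives
`E[T] = ∑ₜ P(T > t) ≤ g(X_0) = g(n)`.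
-/

open MeasureTheory
open scoped ENNReal

theorem Antitone.intervalIntegral_le_sub_mul {f : ℝ → ℝ} (hf : Antitone f) (x y : ℝ) :
    ∫ u in x..y, f u ≤ (y - x) * f x := by
  rcases le_total x y with hxy | hyx
  · calc ∫ u in x..y, f u ≤ ∫ _ in x..y, f x :=
          intervalIntegral.integral_mono_on hxy hf.intervalIntegrable intervalIntegrable_const
            fun u hu => hf hu.1
      _ = (y - x) * f x := by simp
  · have : (x - y) * f x ≤ ∫ u in y..x, f u :=
      calc (x - y) * f x = ∫ _ in y..x, f x := by simp
        _ ≤ ∫ u in y..x, f u :=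
          intervalIntegral.integral_mono_on hyx intervalIntegrable_const hf.intervalIntegrable
            fun u hu => hf hu.2
    rw [intervalIntegral.integral_symm]
    linarith

theorem Monotone.antitone_one_div {h : ℝ → ℝ} (hmono : Monotone h) (hpos : ∀ x, 0 < h x) :
    Antitone fun u => 1 / h u :=
  fun _ _ hab => one_div_le_one_div_of_le (hpos _) (hmono hab)

noncomputable def driftPotential (h : ℝ → ℝ) (x : ℝ) : ℝ :=
  ∫ u in (0)..x, 1 / h u

section driftPotential

variable {h : ℝ → ℝ}

theorem driftPotential_le_add_sub_div (hmono : Monotone h) (hpos : ∀ x, 0 < h x) (x y : ℝ) :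
    driftPotential h y ≤ driftPotential h x + (y - x) / h x := by
  have hf := hmono.antitone_one_div hpos
  have htangent := hf.intervalIntegral_le_sub_mul x y
  rw [driftPotential, driftPotential, ← intervalIntegral.integral_add_adjacent_intervals
    (b := x) hf.intervalIntegrable hf.intervalIntegrable]
  rw [mul_one_div] at htangent
  linarith

theorem driftPotential_le_div (hmono : Monotone h) (hpos : ∀ x, 0 < h x) (x : ℝ) :
    driftPotential h x ≤ x / h 0 := by
  simpa [driftPotential] using driftPotential_le_add_sub_div hmono hpos 0 x

theorem driftPotential_nonneg (hpos : ∀ x, 0 < h x) {x : ℝ} (hx : 0 ≤ x) :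
    0 ≤ driftPotential h x :=
  intervalIntegral.integral_nonneg hx fun u _ => (one_div_pos.2 (hpos u)).le

theorem continuous_driftPotential (hmono : Monotone h) (hpos : ∀ x, 0 < h x) :
    Continuous (driftPotential h) :=
  intervalIntegral.continuous_primitive
    (fun _ _ => (hmono.antitone_one_div hpos).intervalIntegrable) 0

theorem driftPotential_comp_max_one (hmono : Monotone fun u => h (max 1 u))
    (hpos : ∀ x, 0 < h (max 1 x)) {n : ℝ} (hn : 1 ≤ n) :
    driftPotential (fun u => h (max 1 u)) n = 1 / h 1 + ∫ u in Set.Icc 1 n, 1 / h u := by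
  have hf := hmono.antitone_one_div hpos
  rw [driftPotential, ← intervalIntegral.integral_add_adjacent_intervals (b := 1)
    hf.intervalIntegrable hf.intervalIntegrable]
  congr 1
  · rw [intervalIntegral.integral_congr (g := fun _ => 1 / h 1) fun u hu => ?_]
    · simp
    · rw [Set.uIcc_of_le zero_le_one] at hu
      simp [max_eq_left hu.2]
  · rw [intervalIntegral.integral_of_le hn, ← integral_Icc_eq_integral_Ioc]
    exact setIntegral_congr_fun measurableSet_Icc fun u hu => by simp [max_eq_right hu.1]

end driftPotential

theorem setIntegral_mul_le_of_mul_condExp_le {Ω : Type*} {m mΩ : MeasurableSpace Ω}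
    {μ : Measure Ω} (hm : m ≤ mΩ) [SigmaFinite (μ.trim hm)] {s : Set Ω} (hs : MeasurableSet[m] s)
    {φ Y Z : Ω → ℝ} (hφ : StronglyMeasurable[m] φ) (hφY : Integrable (φ * Y) μ)
    (hY : Integrable Y μ) (hZ : IntegrableOn Z s μ)
    (hle : ∀ᵐ ω ∂μ, ω ∈ s → φ ω * μ[Y | m] ω ≤ Z ω) :
    ∫ ω in s, φ ω * Y ω ∂μ ≤ ∫ ω in s, Z ω ∂μ :=
  calc ∫ ω in s, φ ω * Y ω ∂μ = ∫ ω in s, μ[φ * Y | m] ω ∂μ :=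
        (setIntegral_condExp hm hφY hs).symm
    _ ≤ ∫ ω in s, Z ω ∂μ := by
        refine setIntegral_mono_on_ae integrable_condExp.integrableOn hZ (hm s hs) ?_
        filter_upwards [condExp_mul_of_stronglyMeasurable_left hφ hφY hY, hle] with ω hω hωs
        rw [hω]
        exact hωs

theorem iInf_natCast_eq_tsum_indicator (p : ℕ → Prop) :
    ⨅ (t : ℕ) (_ : p t), (t : ℝ≥0∞) = ∑' t, {t | ∀ s ≤ t, ¬ p s}.indicator 1 t := by
  classical
  by_cases hp : ∃ t, p t
  · have hfind : ⨅ (t : ℕ) (_ : p t), (t : ℝ≥0∞) = Nat.find hp :=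
      le_antisymm (iInf₂_le _ (Nat.find_spec hp))
        (le_iInf₂ fun t ht => Nat.cast_le.2 (Nat.find_min' hp ht))
    have hset : {t | ∀ s ≤ t, ¬ p s} = Finset.range (Nat.find hp) := by
      ext t
      simp [Nat.lt_find_iff]
    rw [hfind, tsum_eq_sum (s := Finset.range (Nat.find hp)) fun t ht =>
      Set.indicator_of_notMem (by rwa [hset]) _, Finset.sum_congr rfl fun t ht =>
      Set.indicator_of_mem (by rw [hset]; exact ht) _]
    simp
  · push Not at hp
    simp [hp]

def survivalSet {Ω : Type*} (X : ℕ → Ω → ℝ) (t : ℕ) : Set Ω :=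
  {ω | ∀ s ≤ t, X s ω ≠ 0}

theorem measurableSet_survivalSet {Ω : Type*} {mΩ : MeasurableSpace Ω}
    {F : Filtration ℕ mΩ} {X : ℕ → Ω → ℝ} (hadp : Adapted F X) (t : ℕ) :
    MeasurableSet[F t] (survivalSet X t) := by
  have : survivalSet X t = ⋂ s ∈ Finset.range (t + 1), X s ⁻¹' {0}ᶜ := by
    ext ω; simp [survivalSet]
  rw [this]
  exact .biInter (Set.to_countable _) fun s hs =>
    (hadp s).mono (F.mono (Nat.lt_succ_iff.1 (Finset.mem_range.1 hs))) le_rfl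
      (measurableSet_singleton 0).compl

theorem lintegral_iInf_eq_tsum_measure_survivalSet {Ω : Type*} {mΩ : MeasurableSpace Ω}
    (μ : Measure Ω) {X : ℕ → Ω → ℝ} (hX : ∀ t, MeasurableSet (survivalSet X t)) :
    ∫⁻ ω, ⨅ (t : ℕ) (_ : X t ω = 0), (t : ℝ≥0∞) ∂μ = ∑' t, μ (survivalSet X t) := by
  calc ∫⁻ ω, ⨅ (t : ℕ) (_ : X t ω = 0), (t : ℝ≥0∞) ∂μ
      = ∫⁻ ω, ∑' t, (survivalSet X t).indicator 1 ω ∂μ :=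
        lintegral_congr fun ω => iInf_natCast_eq_tsum_indicator _
    _ = ∑' t, μ (survivalSet X t) := by
      rw [lintegral_tsum fun t => (measurable_one.indicator (hX t)).aemeasurable]
      exact tsum_congr fun t => lintegral_indicator_one (hX t)

theorem integrable_driftPotential_comp {Ω : Type*} {mΩ : MeasurableSpace Ω} {μ : Measure Ω}
    {h : ℝ → ℝ} (hmono : Monotone h) (hpos : ∀ x, 0 < h x)
    {Y : Ω → ℝ} (hY : Integrable Y μ) (hY0 : ∀ ω, 0 ≤ Y ω) :
    Integrable (fun ω => driftPotential h (Y ω)) μ := by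
  refine (hY.const_mul (h 0)⁻¹).mono'
    ((continuous_driftPotential hmono hpos).comp_aestronglyMeasurable hY.1) (.of_forall fun ω => ?_)
  rw [Real.norm_eq_abs, abs_of_nonneg (driftPotential_nonneg hpos (hY0 ω)), inv_mul_eq_div]
  exact driftPotential_le_div hmono hpos _

section drift

variable {Ω : Type*} {mΩ : MeasurableSpace Ω} {μ : Measure Ω} [IsFiniteMeasure μ]
  {F : Filtration ℕ mΩ} {X : ℕ → Ω → ℝ} {h : ℝ → ℝ}

theorem setIntegral_driftPotential_succ_add_le (hadp : Adapted F X)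
    (hint : ∀ t, Integrable (X t) μ) (hrange : ∀ t ω, X t ω = 0 ∨ 1 ≤ X t ω)
    (hmono : Monotone h) (hpos : ∀ x, 0 < h x)
    (hdrift : ∀ t : ℕ, ∀ᵐ ω ∂μ, 1 ≤ X t ω → (μ[X (t + 1) | F t]) ω ≤ X t ω - h (X t ω))
    (t : ℕ) :
    ∫ ω in survivalSet X (t + 1), driftPotential h (X (t + 1) ω) ∂μ + μ.real (survivalSet X t)
      ≤ ∫ ω in survivalSet X t, driftPotential h (X t ω) ∂μ := by
  set A := survivalSet X t
  set φ : Ω → ℝ := fun ω => 1 / h (X t ω)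
  have hX0 : ∀ s ω, 0 ≤ X s ω := fun s ω => (hrange s ω).elim (·.ge) (zero_le_one.trans)
  have hX1 : ∀ ω ∈ A, 1 ≤ X t ω := fun ω hω => (hrange t ω).resolve_left (hω t le_rfl)
  have hA : MeasurableSet A := F.le t _ (measurableSet_survivalSet hadp t)
  have hφ : StronglyMeasurable[F t] φ :=
    ((hmono.antitone_one_div hpos).measurable.comp (hadp t)).stronglyMeasurable
  have hφX : ∀ s, Integrable (fun ω => φ ω * X s ω) μ := fun s =>
    (hint s).bdd_mul (hφ.mono (F.le t)).aestronglyMeasurable (c := 1 / h 0) <|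
      .of_forall fun ω => by
        rw [Real.norm_eq_abs, abs_of_pos (one_div_pos.2 (hpos _))]
        exact one_div_le_one_div_of_le (hpos 0) (hmono (hX0 t ω))
  have hG : ∀ s, Integrable (fun ω => driftPotential h (X s ω)) μ := fun s =>
    integrable_driftPotential_comp hmono hpos (hint s) (hX0 s)
  have hdrift_integral : ∫ ω in A, φ ω * X (t + 1) ω ∂μ ≤ ∫ ω in A, (φ ω * X t ω - 1) ∂μ := by
    refine setIntegral_mul_le_of_mul_condExp_le (F.le t) (measurableSet_survivalSet hadp t) hφ
      (hφX (t + 1)) (hint (t + 1)) ((hφX t).integrableOn.sub (integrable_const 1).integrableOn) ?_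
    filter_upwards [hdrift t] with ω hω hωA
    have hhX := hpos (X t ω)
    calc φ ω * μ[X (t + 1) | F t] ω ≤ φ ω * (X t ω - h (X t ω)) :=
          mul_le_mul_of_nonneg_left (hω (hX1 ω hωA)) (one_div_pos.2 hhX).le
      _ = φ ω * X t ω - 1 := by simp only [φ]; field_simp
  have hmono_set : ∫ ω in survivalSet X (t + 1), driftPotential h (X (t + 1) ω) ∂μ
      ≤ ∫ ω in A, driftPotential h (X (t + 1) ω) ∂μ :=
    setIntegral_mono_set (hG (t + 1)).integrableOn
      (.of_forall fun ω => driftPotential_nonneg hpos (hX0 _ ω))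
      (Filter.Eventually.of_forall fun ω hω s hs => hω s (hs.trans t.le_succ))
  have hincrement : IntegrableOn (fun ω => φ ω * X (t + 1) ω - φ ω * X t ω) A μ :=
    ((hφX (t + 1)).sub (hφX t)).integrableOn
  have htangent : ∫ ω in A, driftPotential h (X (t + 1) ω) ∂μ
      ≤ ∫ ω in A, (driftPotential h (X t ω) + (φ ω * X (t + 1) ω - φ ω * X t ω)) ∂μ := by
    refine setIntegral_mono_on (hG (t + 1)).integrableOn ((hG t).integrableOn.add hincrement) hA
      fun ω _ => ?_
    calc _ ≤ _ := driftPotential_le_add_sub_div hmono hpos (X t ω) (X (t + 1) ω)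
      _ = _ := by simp only [φ]; ring
  rw [integral_add (hG t).integrableOn hincrement,
    integral_sub (hφX (t + 1)).integrableOn (hφX t).integrableOn] at htangent
  rw [integral_sub (hφX t).integrableOn (integrable_const 1).integrableOn, setIntegral_const,
    smul_eq_mul, mul_one] at hdrift_integral
  linarith

theorem tsum_measure_survivalSet_le (hadp : Adapted F X) (hint : ∀ t, Integrable (X t) μ)
    (hrange : ∀ t ω, X t ω = 0 ∨ 1 ≤ X t ω) (hmono : Monotone h) (hpos : ∀ x, 0 < h x)
    (hdrift : ∀ t : ℕ, ∀ᵐ ω ∂μ, 1 ≤ X t ω → (μ[X (t + 1) | F t]) ω ≤ X t ω - h (X t ω)) :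
    ∑' t, μ (survivalSet X t) ≤ ENNReal.ofReal (∫ ω, driftPotential h (X 0 ω) ∂μ) := by
  set r : ℕ → ℝ := fun t => ∫ ω in survivalSet X t, driftPotential h (X t ω) ∂μ
  have hX0 : ∀ s ω, 0 ≤ X s ω := fun s ω => (hrange s ω).elim (·.ge) (zero_le_one.trans)
  have hr_nonneg : ∀ t, 0 ≤ r t := fun t =>
    setIntegral_nonneg (F.le t _ (measurableSet_survivalSet hadp t))
      fun ω _ => driftPotential_nonneg hpos (hX0 t ω)
  have htelescope : ∀ m, ∑ t ∈ Finset.range m, μ.real (survivalSet X t) + r m ≤ r 0 := by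
    intro m
    induction m with
    | zero => simp
    | succ m ih =>
      have := setIntegral_driftPotential_succ_add_le hadp hint hrange hmono hpos hdrift m
      rw [Finset.sum_range_succ]
      linarith
  have hr0 : r 0 ≤ ∫ ω, driftPotential h (X 0 ω) ∂μ :=
    setIntegral_le_integral (integrable_driftPotential_comp hmono hpos (hint 0) (hX0 0))
      (.of_forall fun ω => driftPotential_nonneg hpos (hX0 0 ω))
  refine ENNReal.tsum_le_of_sum_range_le fun m => ?_
  calc ∑ t ∈ Finset.range m, μ (survivalSet X t)
      = ENNReal.ofReal (∑ t ∈ Finset.range m, μ.real (survivalSet X t)) := by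
        rw [ENNReal.ofReal_sum_of_nonneg fun t _ => measureReal_nonneg]
        exact Finset.sum_congr rfl fun t _ => (ofReal_measureReal (measure_ne_top μ _)).symm
    _ ≤ ENNReal.ofReal (∫ ω, driftPotential h (X 0 ω) ∂μ) :=
        ENNReal.ofReal_le_ofReal (by linarith [htelescope m, hr_nonneg m])

end drift

/-- Variable drift theorem: if an adapted integrable process with values in `{0} ∪ [1, ∞)`
starts at `n ≥ 1` and, on the event `X_t ≥ 1`, satisfies `E[X_{t+1} | F_t] ≤ X_t - h(X_t)`
for a positive increasing function `h` on `[1, ∞)`, then the first hitting time `T` of `0`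
satisfies `E[T] ≤ 1/h(1) + ∫₁ⁿ 1/h(u) du`. -/
theorem variable_drift_theorem
    {Ω : Type*} {mΩ : MeasurableSpace Ω} (μ : Measure Ω) [IsProbabilityMeasure μ]
    (F : Filtration ℕ mΩ)
    (X : ℕ → Ω → ℝ) (hadp : Adapted F X)
    (hint : ∀ t, Integrable (X t) μ)
    (hrange : ∀ t ω, X t ω = 0 ∨ 1 ≤ X t ω)
    (n : ℝ) (hn : 1 ≤ n) (h0 : ∀ᵐ ω ∂μ, X 0 ω = n)
    (h : ℝ → ℝ)
    (hpos : ∀ x, 1 ≤ x → 0 < h x)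
    (hmono : ∀ x y, 1 ≤ x → x ≤ y → h x ≤ h y)
    (hdrift : ∀ t : ℕ, ∀ᵐ ω ∂μ, 1 ≤ X t ω → (μ[X (t + 1) | F t]) ω ≤ X t ω - h (X t ω)) :
    ∫⁻ ω, ⨅ (t : ℕ) (_ : X t ω = 0), (t : ℝ≥0∞) ∂μ
      ≤ ENNReal.ofReal (1 / h 1 + ∫ u in Set.Icc (1 : ℝ) n, 1 / h u) := by
  set h' : ℝ → ℝ := fun u => h (max 1 u)
  have hmono' : Monotone h' := fun x y hxy =>
    hmono _ _ (le_max_left 1 x) (max_le_max_left 1 hxy)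
  have hpos' : ∀ x, 0 < h' x := fun x => hpos _ (le_max_left 1 x)
  have hdrift' : ∀ t : ℕ, ∀ᵐ ω ∂μ, 1 ≤ X t ω → (μ[X (t + 1) | F t]) ω ≤ X t ω - h' (X t ω) := by
    refine fun t => (hdrift t).mono fun ω hω hX => ?_
    simpa only [h', max_eq_right hX] using hω hX
  have hX : ∀ t, MeasurableSet (survivalSet X t) := fun t =>
    F.le t _ (measurableSet_survivalSet hadp t)
  calc ∫⁻ ω, ⨅ (t : ℕ) (_ : X t ω = 0), (t : ℝ≥0∞) ∂μ
      = ∑' t, μ (survivalSet X t) := lintegral_iInf_eq_tsum_measure_survivalSet μ hX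
    _ ≤ ENNReal.ofReal (∫ ω, driftPotential h' (X 0 ω) ∂μ) :=
        tsum_measure_survivalSet_le hadp hint hrange hmono' hpos' hdrift'
    _ = ENNReal.ofReal (1 / h 1 + ∫ u in Set.Icc (1 : ℝ) n, 1 / h u) := by
        rw [integral_congr_ae (h0.mono fun ω hω => by rw [hω]), integral_const, probReal_univ,
          one_smul, driftPotential_comp_max_one hmono' hpos' hn]
end
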